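/- arXiv:1104.2262 — 4 statements merged into one kernel-verified Lean document; each statement's English description precedes it below -/
import Mathlib

section
/- Let G be a node-labelled undirected graph, T its undirected unraveling from a node v₀ with projection π. If v and w are nodes of T with π(v) = π(w), then v and w are undirected-bisimilar in T: there is an undirected bisimulation Z on T (i.e. between T and itself) with (v,w) ∈ Z. -/
open FirstOrder

namespace GFPaper

variable {L : FirstOrder.Language} {M N : Type*} {K V : Type*}

/-! ### Guarded sets, guarded tuples, partial isomorphisms, guarded bisimulations -/

/-- A guarded set of a `Σ`-structure is a nonempty (finite) subset contained in the set of
components of some tuple belonging to some relation of the structure. -/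
def IsGuardedSet (SM : L.Structure M) (B : Set M) : Prop :=
  B.Nonempty ∧ ∃ (n : ℕ) (R : L.Relations n) (a : Fin n → M),
    SM.RelMap R a ∧ B ⊆ Set.range a

/-- A guarded tuple is a tuple of pairwise distinct elements whose set of components is
a guarded set. -/
def IsGuardedTuple (SM : L.Structure M) {k : ℕ} (a : Fin k → M) : Prop :=
  Function.Injective a ∧ IsGuardedSet SM (Set.range a)

/-- A partial isomorphism between two `Σ`-structures: an injective map between finite subsets
preserving and reflecting all atomic relations.  The function `toFun` is total, but only its
restriction to `dom` is meaningful. -/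
structure PartialIso (SM : L.Structure M) (SN : L.Structure N) where
  dom : Set M
  finite_dom : dom.Finite
  toFun : M → N
  injOn : Set.InjOn toFun dom
  rel_iff : ∀ {n : ℕ} (R : L.Relations n) (a : Fin n → M), (∀ i, a i ∈ dom) →
    (SM.RelMap R a ↔ SN.RelMap R (fun i => toFun (a i)))

/-- The range of a partial isomorphism. -/
def PartialIso.rng {SM : L.Structure M} {SN : L.Structure N} (α : PartialIso SM SN) : Set N :=
  α.toFun '' α.dom

/-- A guarded bisimulation between two `Σ`-structures: a nonempty family of partial
isomorphisms between finite subsets satisfying the back-and-forth conditions over guarded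
sets. -/
structure GuardedBisim (SM : L.Structure M) (SN : L.Structure N) where
  Z : Set (PartialIso SM SN)
  nonempty : Z.Nonempty
  forth : ∀ α ∈ Z, ∀ B₀ : Set M, IsGuardedSet SM B₀ →
    ∃ γ ∈ Z, B₀ ⊆ γ.dom ∧ ∀ x ∈ α.dom ∩ γ.dom, α.toFun x = γ.toFun x
  back : ∀ α ∈ Z, ∀ B₁ : Set N, IsGuardedSet SN B₁ →
    ∃ γ ∈ Z, B₁ ⊆ γ.rng ∧ ∀ x ∈ α.dom, ∀ y ∈ γ.dom, α.toFun x = γ.toFun y → x = y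

/-- `𝔄₀,ā ∼_g 𝔄₁,b̄` : some guarded bisimulation contains the map `ā ↦ b̄`. -/
def GBisimTuple (SM : L.Structure M) (SN : L.Structure N) {k : ℕ}
    (a : Fin k → M) (b : Fin k → N) : Prop :=
  ∃ (Z : GuardedBisim SM SN) (α : PartialIso SM SN), α ∈ Z.Z ∧
    α.dom = Set.range a ∧ ∀ i, α.toFun (a i) = b i

/-- Guarded bisimilarity has finite index on the guarded tuples of a structure:
there is a finite set of guarded tuples such that every guarded tuple is guarded bisimilar
to one of them. -/
def FiniteGBisimIndex (SM : L.Structure M) : Prop :=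
  ∃ S : Set (Σ k : ℕ, Fin k → M), S.Finite ∧
    ∀ ⦃k : ℕ⦄ (a : Fin k → M), IsGuardedTuple SM a →
      ∃ b : Fin k → M, (⟨k, b⟩ : Σ k : ℕ, Fin k → M) ∈ S ∧
        IsGuardedTuple SM b ∧ GBisimTuple SM SM a b

/-! ### Undirected unraveling and undirected bisimulation -/

/-- `t` extends `s` by one edge (i.e. `s` is obtained from `t` by deleting its last node). -/
def ExtendsBy (G : SimpleGraph V) (v₀ : V) (s t : Σ u : V, G.Walk v₀ u) : Prop :=
  ∃ h : G.Adj s.1 t.1, t.2 = s.2.concat h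

/-- The undirected unraveling of a graph `G` from a node `v₀`: nodes are the finite walks
of `G` starting at `v₀`, and edges join each walk of positive length to the walk obtained
by deleting its last node. -/
def unraveling (G : SimpleGraph V) (v₀ : V) : SimpleGraph (Σ u : V, G.Walk v₀ u) where
  Adj s t := ExtendsBy G v₀ s t ∨ ExtendsBy G v₀ t s
  symm := ⟨fun _ _ h => h.symm⟩
  loopless := ⟨fun s h => by
    rcases h with ⟨h, _⟩ | ⟨h, _⟩ <;> exact G.loopless.irrefl s.1 h⟩

/-- The projection sending a node of the unraveling (a walk) to its terminal node. -/
def unravelingProj (G : SimpleGraph V) (v₀ : V) : (Σ u : V, G.Walk v₀ u) → V :=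
  fun s => s.1

/-- An undirected bisimulation between node-labelled undirected graphs. -/
def IsUndirectedBisim {V₀ V₁ Λ : Type*} (G₀ : SimpleGraph V₀) (G₁ : SimpleGraph V₁)
    (ℓ₀ : V₀ → Λ) (ℓ₁ : V₁ → Λ) (Z : Set (V₀ × V₁)) : Prop :=
  ∀ p ∈ Z, ℓ₀ p.1 = ℓ₁ p.2 ∧
    (∀ w₀, G₀.Adj p.1 w₀ → ∃ w₁, G₁.Adj p.2 w₁ ∧ (w₀, w₁) ∈ Z) ∧
    (∀ w₁, G₁.Adj p.2 w₁ → ∃ w₀, G₀.Adj p.1 w₀ ∧ (w₀, w₁) ∈ Z)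

/-! ### Tabloids -/

/-- A tabloid over a relational signature `L` and a set `K` of constant names: an undirected
graph where every node `v` carries a set `consts v ⊆ K` of constants and an atomic type
over `consts v`, encoded as the collection `rel v` of atomic facts over `consts v`; the
types of adjacent nodes agree over their common constants. -/
structure Tabloid (L : FirstOrder.Language) (K : Type*) (V : Type*) where
  graph : SimpleGraph V
  consts : V → Set K
  rel : ∀ (_v : V) {n : ℕ}, L.Relations n → (Fin n → K) → Prop
  rel_mem : ∀ (v : V) {n : ℕ} (R : L.Relations n) (c : Fin n → K),
    rel v R c → ∀ i, c i ∈ consts v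
  compat : ∀ (v w : V), graph.Adj v w → ∀ {n : ℕ} (R : L.Relations n) (c : Fin n → K),
    (∀ i, c i ∈ consts v ∩ consts w) → (rel v R c ↔ rel w R c)

namespace Tabloid

variable (T : Tabloid L K V)

/-- The pairs `(v, c)` with `v` a node and `c` one of its constants. -/
def Pairs : Type _ := {q : V × K // q.2 ∈ T.consts q.1}

/-- The relation `(v,c) ≈ (v',c')` iff `c = c'` and `c` belongs to the constants of every
node on the (unique, when the tabloid is a tree) path connecting `v` and `v'`. -/
def keq (p q : T.Pairs) : Prop :=
  p.1.2 = q.1.2 ∧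
    ∀ w : T.graph.Walk p.1.1 q.1.1, w.IsPath → ∀ z ∈ w.support, p.1.2 ∈ T.consts z

/-- The set of nodes `v` witnessing simultaneously the classes `[v_i, c_i]`, i.e. such that
`c_i ∈ K_v` and `[v, c_i] = [v_i, c_i]` for all `i`. -/
def classSet {n : ℕ} (p : Fin n → T.Pairs) : Set V :=
  {v | ∀ i, ∃ h : (p i).1.2 ∈ T.consts v,
    Quot.mk T.keq ⟨((v, (p i).1.2) : V × K), h⟩ = Quot.mk T.keq (p i)}

/-- The structure `𝔄(T)` associated to a (tree) tabloid: the universe is the set of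
`≈`-classes `[v,c]`, and a tuple satisfies a relation iff some single node witnesses all
classes and its atomic type contains the corresponding fact. -/
def AT [L.IsRelational] : L.Structure (Quot T.keq) where
  funMap := fun f _ => isEmptyElim f
  RelMap := fun {n} R x =>
    ∃ (v : V) (c : Fin n → K) (h : ∀ i, c i ∈ T.consts v),
      (∀ i, Quot.mk T.keq ⟨((v, c i) : V × K), h i⟩ = x i) ∧ T.rel v R c

/-- The undirected unraveling of a tabloid from a node: the unraveling of the underlying
graph, each walk carrying the labels of its terminal node. -/
def unravel (v₀ : V) : Tabloid L K (Σ u : V, T.graph.Walk v₀ u) where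
  graph := unraveling T.graph v₀
  consts := fun s => T.consts s.1
  rel := fun s => T.rel s.1
  rel_mem := fun s _ R c h i => T.rel_mem s.1 R c h i
  compat := by
    rintro s t (⟨h, _⟩ | ⟨h, _⟩) n R c hc
    · exact T.compat s.1 t.1 h R c hc
    · exact (T.compat t.1 s.1 h R c (fun i => ⟨(hc i).2, (hc i).1⟩)).symm

/-- An isomorphism of a tabloid onto itself: a graph automorphism preserving both labels. -/
structure Auto where
  toEquiv : V ≃ V
  adj_iff : ∀ z z', T.graph.Adj z z' ↔ T.graph.Adj (toEquiv z) (toEquiv z')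
  consts_eq : ∀ z, T.consts (toEquiv z) = T.consts z
  rel_iff : ∀ (z : V) {n : ℕ} (R : L.Relations n) (c : Fin n → K),
    T.rel (toEquiv z) R c ↔ T.rel z R c

end Tabloid

/-! ### The tabloid built from a finite model -/

/-- `χ` is the graph of a function. -/
def IsFunGraph (χ : Set (M × K)) : Prop :=
  ∀ ⦃a b b'⦄, (a, b) ∈ χ → (a, b') ∈ χ → b = b'

/-- `χ` is the graph of an injective (partial) function. -/
def IsInjGraph (χ : Set (M × K)) : Prop :=
  ∀ ⦃a a' b⦄, (a, b) ∈ χ → (a', b) ∈ χ → a = a'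

/-- The vertices of the tabloid built from a structure: injections `χ : A → K` with `A`
a guarded set, encoded via their graphs. -/
def ChiVertex (SM : L.Structure M) (K : Type*) : Type _ :=
  {χ : Set (M × K) // IsFunGraph χ ∧ IsInjGraph χ ∧ IsGuardedSet SM {a | ∃ b, (a, b) ∈ χ}}

/-- The constants of the vertex `χ`: the range of `χ`. -/
def chiConsts {SM : L.Structure M} (χ : ChiVertex SM K) : Set K :=
  {b | ∃ a, (a, b) ∈ χ.1}

/-- The atomic type of the vertex `χ`: the image under `χ` of the atomic type of its
domain in the structure. -/
def chiRel {SM : L.Structure M} (χ : ChiVertex SM K) {n : ℕ}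
    (R : L.Relations n) (c : Fin n → K) : Prop :=
  ∃ a : Fin n → M, (∀ i, (a i, c i) ∈ χ.1) ∧ SM.RelMap R a

/-- Adjacency of vertices: `χ ∪ χ'` is an injective function (and `χ ≠ χ'`). -/
def chiAdj {SM : L.Structure M} (χ χ' : ChiVertex SM K) : Prop :=
  χ ≠ χ' ∧ IsFunGraph (χ.1 ∪ χ'.1) ∧ IsInjGraph (χ.1 ∪ χ'.1)

/-! ### The guarded fragment of first-order logic -/

/-- Formulas of the guarded fragment of first-order logic over a relational signature `L`,
with variables drawn from `ℕ`: atomic formulas (including equalities), Boolean connectives,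
and guarded quantification `∃ȳ (R(x̄ȳ) ∧ φ)` and `∀ȳ (R(x̄ȳ) → φ)`. -/
inductive GFormula (L : FirstOrder.Language) : Type _ where
  | equal : ℕ → ℕ → GFormula L
  | rel : ∀ {n : ℕ}, L.Relations n → (Fin n → ℕ) → GFormula L
  | not : GFormula L → GFormula L
  | and : GFormula L → GFormula L → GFormula L
  | or : GFormula L → GFormula L → GFormula L
  | exGuard : ∀ {n : ℕ}, L.Relations n → (Fin n → ℕ) → Set ℕ → GFormula L → GFormula L
  | allGuard : ∀ {n : ℕ}, L.Relations n → (Fin n → ℕ) → Set ℕ → GFormula L → GFormula L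

namespace GFormula

/-- The free variables of a formula. -/
def free : GFormula L → Set ℕ
  | equal i j => {i, j}
  | rel _ ts => Set.range ts
  | not φ => φ.free
  | and φ ψ => φ.free ∪ ψ.free
  | or φ ψ => φ.free ∪ ψ.free
  | exGuard _ ts ys φ => (Set.range ts ∪ φ.free) \ ys
  | allGuard _ ts ys φ => (Set.range ts ∪ φ.free) \ ys

/-- Well-formedness for the guarded fragment: in every guarded quantification
`∃ȳ (R(x̄ȳ) ∧ φ)` resp. `∀ȳ (R(x̄ȳ) → φ)` the guard atom contains all free variables
of `φ` as well as all quantified variables. -/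
def IsGF : GFormula L → Prop
  | equal _ _ => True
  | rel _ _ => True
  | not φ => φ.IsGF
  | and φ ψ => φ.IsGF ∧ ψ.IsGF
  | or φ ψ => φ.IsGF ∧ ψ.IsGF
  | exGuard _ ts ys φ => φ.free ⊆ Set.range ts ∧ ys ⊆ Set.range ts ∧ φ.IsGF
  | allGuard _ ts ys φ => φ.free ⊆ Set.range ts ∧ ys ⊆ Set.range ts ∧ φ.IsGF

/-- Satisfaction of a guarded formula in a structure under a variable assignment. -/
def Sat (SM : L.Structure M) : GFormula L → (ℕ → M) → Prop
  | equal i j, β => β i = β j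
  | rel R ts, β => SM.RelMap R (fun i => β (ts i))
  | not φ, β => ¬ Sat SM φ β
  | and φ ψ, β => Sat SM φ β ∧ Sat SM ψ β
  | or φ ψ, β => Sat SM φ β ∨ Sat SM ψ β
  | exGuard R ts ys φ, β => ∃ β' : ℕ → M, (∀ x ∉ ys, β' x = β x) ∧
      SM.RelMap R (fun i => β' (ts i)) ∧ Sat SM φ β'
  | allGuard R ts ys φ, β => ∀ β' : ℕ → M, (∀ x ∉ ys, β' x = β x) →
      SM.RelMap R (fun i => β' (ts i)) → Sat SM φ β'

/-- Every subformula of `φ` has at most `n` free variables. -/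
def WidthLE (n : ℕ) : GFormula L → Prop
  | equal i j => (({i, j} : Set ℕ)).ncard ≤ n
  | rel _ ts => (Set.range ts).ncard ≤ n
  | not φ => φ.WidthLE n
  | and φ ψ => (φ.free ∪ ψ.free).ncard ≤ n ∧ φ.WidthLE n ∧ ψ.WidthLE n
  | or φ ψ => (φ.free ∪ ψ.free).ncard ≤ n ∧ φ.WidthLE n ∧ ψ.WidthLE n
  | exGuard _ ts _ φ => (Set.range ts ∪ φ.free).ncard ≤ n ∧ φ.WidthLE n
  | allGuard _ ts _ φ => (Set.range ts ∪ φ.free).ncard ≤ n ∧ φ.WidthLE n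

end GFormula


/-- The kernel of a bounded morphism (p-morphism) is a bisimulation. -/
theorem isUndirectedBisim_setOf_map_eq {W V Λ : Type*} {H : SimpleGraph W} {G : SimpleGraph V}
    (φ : H →g G) (ℓ : V → Λ) (hlift : ∀ s u, G.Adj (φ s) u → ∃ t, H.Adj s t ∧ φ t = u) :
    IsUndirectedBisim H H (ℓ ∘ φ) (ℓ ∘ φ) {p | φ p.1 = φ p.2} := by
  rintro ⟨s, t⟩ (hst : φ s = φ t)
  refine ⟨congrArg ℓ hst, fun s' hs' => ?_, fun t' ht' => ?_⟩
  · obtain ⟨t', ht', hφ⟩ := hlift t (φ s') (hst ▸ φ.map_adj hs')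
    exact ⟨t', ht', hφ.symm⟩
  · obtain ⟨s', hs', hφ⟩ := hlift s (φ t') (hst ▸ φ.map_adj ht')
    exact ⟨s', hs', hφ⟩

theorem unraveling_adj_concat (G : SimpleGraph V) (v₀ : V) (s : Σ u : V, G.Walk v₀ u) {u : V}
    (h : G.Adj s.1 u) : (unraveling G v₀).Adj s ⟨u, s.2.concat h⟩ :=
  Or.inl ⟨h, rfl⟩

def unravelingProjHom (G : SimpleGraph V) (v₀ : V) : unraveling G v₀ →g G where
  toFun := unravelingProj G v₀
  map_rel' := by
    rintro s t (⟨h, -⟩ | ⟨h, -⟩)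
    exacts [h, h.symm]

theorem unravelingProjHom_lift (G : SimpleGraph V) (v₀ : V) (s : Σ u : V, G.Walk v₀ u) (u : V)
    (h : G.Adj (unravelingProjHom G v₀ s) u) :
    ∃ t, (unraveling G v₀).Adj s t ∧ unravelingProjHom G v₀ t = u :=
  ⟨_, unraveling_adj_concat G v₀ s h, rfl⟩

/-- If two nodes of the undirected unraveling have the same projection,
then they are undirected-bisimilar in the unraveling. -/
theorem unraveling_bisimilar_of_proj_eq {V Λ : Type*} (G : SimpleGraph V) (ℓ : V → Λ)
    (v₀ : V) (v w : Σ u : V, G.Walk v₀ u)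
    (h : unravelingProj G v₀ v = unravelingProj G v₀ w) :
    ∃ Z : Set ((Σ u : V, G.Walk v₀ u) × (Σ u : V, G.Walk v₀ u)),
      IsUndirectedBisim (unraveling G v₀) (unraveling G v₀)
        (fun t => ℓ (unravelingProj G v₀ t)) (fun t => ℓ (unravelingProj G v₀ t)) Z ∧
      (v, w) ∈ Z :=
  ⟨_, isUndirectedBisim_setOf_map_eq (unravelingProjHom G v₀) ℓ (unravelingProjHom_lift G v₀), h⟩

end GFPaper
end

section
/- Let T be a tree tabloid and let [v₁,c₁],…,[vₙ,cₙ] be ≈-equivalence classes. Then the set of nodes v of T such that c₁,…,cₙ ∈ K_v and [v,cᵢ] = [vᵢ,cᵢ] for all i ≤ n is connected in T: if v and v' both belong to this set, then so does every node on the unique path connecting v and v'. -/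
open FirstOrder

namespace GFPaper

variable {L : FirstOrder.Language} {M N : Type*} {K V : Type*}

/-! In a tree, `(a, c) ≈ (b, c)` says exactly that `c` labels every node of the path from `a`
to `b`; this makes `≈` an equivalence. For `v, v'` in the class set, `[v, cᵢ] = [v', cᵢ]`, so `cᵢ`
labels the path from `v` to `v'`, and every node `z` on it lies on a `cᵢ`-labelled path to `v`,
whence `[z, cᵢ] = [v, cᵢ] = [vᵢ, cᵢ]`. -/

namespace Tabloid

variable {T : Tabloid L K V}

open SimpleGraph

theorem keq_iff_of_isPath (hT : T.graph.IsAcyclic) {a b : V} {c : K} (ha : c ∈ T.consts a)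
    (hb : c ∈ T.consts b) {w : T.graph.Walk a b} (hw : w.IsPath) :
    T.keq ⟨(a, c), ha⟩ ⟨(b, c), hb⟩ ↔ ∀ z ∈ w.support, c ∈ T.consts z :=
  ⟨fun h => h.2 w hw, fun h => ⟨rfl, fun u hu => by
    obtain rfl : u = w := congrArg Subtype.val ((hT.subsingleton_path a b).elim ⟨u, hu⟩ ⟨w, hw⟩)
    exact h⟩⟩

theorem keq_equivalence (hT : T.graph.IsTree) : Equivalence T.keq where
  refl := by
    rintro ⟨⟨a, c⟩, hc⟩
    refine (keq_iff_of_isPath hT.isAcyclic hc hc Walk.IsPath.nil).2 ?_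
    simpa using hc
  symm := by
    rintro ⟨⟨a, c⟩, ha⟩ ⟨⟨b, d⟩, hb⟩ ⟨rfl, h⟩
    exact ⟨rfl, fun u hu z hz => h u.reverse hu.reverse z (by simpa using hz)⟩
  trans := by
    classical
    rintro ⟨⟨a, c⟩, ha⟩ ⟨⟨b, d⟩, hb⟩ ⟨⟨e, f⟩, he⟩ ⟨rfl, hab⟩ ⟨rfl, hbe⟩
    obtain ⟨u₁, hu₁, -⟩ := hT.existsUnique_path a b
    obtain ⟨u₂, hu₂, -⟩ := hT.existsUnique_path b e
    refine (keq_iff_of_isPath hT.isAcyclic ha he (u₁.append u₂).bypass_isPath).2 fun z hz => ?_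
    rcases (Walk.mem_support_append_iff _ _).1 (Walk.support_bypass_subset_support _ hz)
      with hz | hz
    exacts [hab u₁ hu₁ z hz, hbe u₂ hu₂ z hz]

theorem keq_of_mk_eq_mk (hT : T.graph.IsTree) {p q : T.Pairs}
    (h : Quot.mk T.keq p = Quot.mk T.keq q) : T.keq p q :=
  ((keq_equivalence hT).quot_mk_eq_iff p q).1 h

end Tabloid

theorem classSet_connected_general {L : FirstOrder.Language} {K V : Type*}
    (T : Tabloid L K V) (ht : T.graph.IsTree) {n : ℕ} (p : Fin n → T.Pairs)
    (v v' : V) (hv : v ∈ T.classSet p) (hv' : v' ∈ T.classSet p)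
    (w : T.graph.Walk v v') (hw : w.IsPath) :
    ∀ z ∈ w.support, z ∈ T.classSet p := by
  classical
  intro z hz i
  obtain ⟨hvc, hvp⟩ := hv i
  obtain ⟨hv'c, hv'p⟩ := hv' i
  have hw_labelled : ∀ y ∈ w.support, (p i).1.2 ∈ T.consts y :=
    (Tabloid.keq_iff_of_isPath ht.isAcyclic hvc hv'c hw).1
      (Tabloid.keq_of_mk_eq_mk ht (hvp.trans hv'p.symm))
  have hzc := hw_labelled z hz
  have hzv : T.keq ⟨(z, _), hzc⟩ ⟨(v, _), hvc⟩ :=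
    (Tabloid.keq_iff_of_isPath ht.isAcyclic hzc hvc (hw.takeUntil hz).reverse).2 fun y hy =>
      hw_labelled y (w.support_takeUntil_subset_support hz (by simpa using hy))
  exact ⟨hzc, (Quot.sound hzv).trans hvp⟩

/-- For a tree tabloid `T` and `≈`-classes `[v₁,c₁],…,[vₙ,cₙ]`, the set of
nodes `v` with `cᵢ ∈ K_v` and `[v,cᵢ] = [vᵢ,cᵢ]` for all `i` is connected in `T`: every node
on the unique path connecting two of its members also belongs to it. -/
theorem classSet_connected {L : FirstOrder.Language} [L.IsRelational] {K V : Type*}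
    [Finite K] (T : Tabloid L K V) (ht : T.graph.IsTree) {n : ℕ} (p : Fin n → T.Pairs)
    (v v' : V) (hv : v ∈ T.classSet p) (hv' : v' ∈ T.classSet p)
    (w : T.graph.Walk v v') (hw : w.IsPath) :
    ∀ z ∈ w.support, z ∈ T.classSet p :=
  classSet_connected_general T ht p v v' hv hv' w hw

end GFPaper
end

section
/- Let T be a tree tabloid and let [v₁,c₁],…,[vₙ,cₙ] be ≈-equivalence classes. If v and v' are two nodes of T such that [v,cᵢ] = [vᵢ,cᵢ] for all i ≤ n and also [v',cᵢ] = [vᵢ,cᵢ] for all i ≤ n, then for every n-ary relation symbol R of Σ: τ_v ⊨ R(c₁,…,cₙ) if and only if τ_{v'} ⊨ R(c₁,…,cₙ). (Hence the definition of the relations of the structure 𝔄(T) does not depend on the choice of the witnessing node.) -/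
open FirstOrder

namespace GFPaper

variable {L : FirstOrder.Language} {M N : Type*} {K V : Type*}

/-! On a tree tabloid `≈` is an equivalence relation, so a node witnessing all classes
`[vᵢ,cᵢ]` is `≈`-related to any other such node at every `cᵢ`: all the `cᵢ` occur at every node
of the path between them. Adjacent nodes agree on atomic facts over common constants, so the
fact `R(c₁,…,cₙ)` is carried along that path. -/

namespace Tabloid

variable {T : Tabloid L K V}

theorem rel_iff_of_walk {n : ℕ} (R : L.Relations n) (c : Fin n → K) {a b : V}
    (w : T.graph.Walk a b) (hc : ∀ z ∈ w.support, ∀ i, c i ∈ T.consts z) :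
    T.rel a R c ↔ T.rel b R c := by
  induction w with
  | nil => rfl
  | cons hadj w ih =>
    have hstep := T.compat _ _ hadj R c fun i =>
      ⟨hc _ (w.support.mem_cons_self) i, hc _ (by simp) i⟩
    exact hstep.trans (ih fun z hz => hc z (List.mem_cons_of_mem _ hz))

theorem keq_refl (p : T.Pairs) : T.keq p p := by
  refine ⟨rfl, fun w hw z hz => ?_⟩
  rw [SimpleGraph.Walk.nil_iff_support_eq.mp (SimpleGraph.Walk.isPath_iff_nil.mp hw),
    List.mem_singleton] at hz
  exact hz ▸ p.2

theorem keq_symm {p q : T.Pairs} (h : T.keq p q) : T.keq q p :=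
  ⟨h.1.symm, fun w hw z hz =>
    h.1 ▸ h.2 w.reverse hw.reverse z (by simpa using hz)⟩

/-- In a tree the path from `p` to `r` runs inside the union of the paths from `p` to `q` and
from `q` to `r`. -/
theorem keq_trans (ht : T.graph.IsTree) {p q r : T.Pairs} (hpq : T.keq p q)
    (hqr : T.keq q r) : T.keq p r := by
  classical
  refine ⟨hpq.1.trans hqr.1, fun w hw z hz => ?_⟩
  obtain ⟨w₁, hw₁, -⟩ := ht.existsUnique_path p.1.1 q.1.1
  obtain ⟨w₂, hw₂, -⟩ := ht.existsUnique_path q.1.1 r.1.1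
  have hw_eq : w = (w₁.append w₂).bypass :=
    (ht.existsUnique_path _ _).unique hw (w₁.append w₂).bypass_isPath
  have hz' := (w₁.append w₂).support_bypass_subset_support (hw_eq ▸ hz)
  rcases (SimpleGraph.Walk.mem_support_append_iff w₁ w₂).mp hz' with hz₁ | hz₂
  · exact hpq.2 w₁ hw₁ z hz₁
  · exact hpq.1 ▸ hqr.2 w₂ hw₂ z hz₂

theorem keq_equivalence_s6 (ht : T.graph.IsTree) : Equivalence T.keq :=
  ⟨keq_refl, keq_symm, keq_trans ht⟩

theorem const_mem_of_mem_classSet (ht : T.graph.IsTree) {n : ℕ} {p : Fin n → T.Pairs}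
    {v v' : V} (hv : v ∈ T.classSet p) (hv' : v' ∈ T.classSet p) (w : T.graph.Walk v v')
    (hw : w.IsPath) : ∀ z ∈ w.support, ∀ i, (p i).1.2 ∈ T.consts z := by
  intro z hz i
  obtain ⟨h, hvp⟩ := hv i
  obtain ⟨h', hv'p⟩ := hv' i
  have hkeq : T.keq ⟨(v, (p i).1.2), h⟩ ⟨(v', (p i).1.2), h'⟩ :=
    ((keq_equivalence_s6 ht).quot_mk_eq_iff _ _).mp (hvp.trans hv'p.symm)
  exact hkeq.2 w hw z hz

end Tabloid

theorem rel_independent_of_witness_general {L : FirstOrder.Language} {K V : Type*}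
    (T : Tabloid L K V) (ht : T.graph.IsTree) {n : ℕ} (p : Fin n → T.Pairs)
    (v v' : V) (hv : v ∈ T.classSet p) (hv' : v' ∈ T.classSet p) (R : L.Relations n) :
    T.rel v R (fun i => (p i).1.2) ↔ T.rel v' R (fun i => (p i).1.2) := by
  obtain ⟨w, hw, -⟩ := ht.existsUnique_path v v'
  exact T.rel_iff_of_walk R _ w (T.const_mem_of_mem_classSet ht hv hv' w hw)

/-- For a tree tabloid `T` and `≈`-classes `[v₁,c₁],…,[vₙ,cₙ]`, any two
nodes `v, v'` witnessing all these classes carry the same atomic facts `R(c₁,…,cₙ)`: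
the definition of the relations of `𝔄(T)` does not depend on the witnessing node. -/
theorem rel_independent_of_witness {L : FirstOrder.Language} [L.IsRelational] {K V : Type*}
    [Finite K] (T : Tabloid L K V) (ht : T.graph.IsTree) {n : ℕ} (p : Fin n → T.Pairs)
    (v v' : V) (hv : v ∈ T.classSet p) (hv' : v' ∈ T.classSet p) (R : L.Relations n) :
    T.rel v R (fun i => (p i).1.2) ↔ T.rel v' R (fun i => (p i).1.2) :=
  rel_independent_of_witness_general T ht p v v' hv hv' R

end GFPaper
end

section
/- Let T be a tree tabloid and suppose there is an isomorphism of T onto itself (a graph automorphism preserving both labels K_z and τ_z) mapping node v to node w, and let K_v = K_w = {c₁,…,cᵣ}. Then 𝔄(T),([v,c₁],…,[v,cᵣ]) ∼_g 𝔄(T),([w,c₁],…,[w,cᵣ]), i.e. there is a guarded bisimulation between 𝔄(T) and itself containing the map ([v,c₁],…,[v,cᵣ]) ↦ ([w,c₁],…,[w,cᵣ]). -/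
open FirstOrder

namespace GFPaper

variable {L : FirstOrder.Language} {M N : Type*} {K V : Type*}

/-! An isomorphism between two structures maps every tuple to a guarded bisimilar one: its
restrictions to finite sets are partial isomorphisms, and together they form a guarded
bisimulation. The automorphism of the tabloid induces such an isomorphism of `𝔄(T)` onto itself,
because it maps paths to paths and preserves the labels, hence the relation `≈`. -/

theorem IsGuardedSet.finite {SM : L.Structure M} {B : Set M} (h : IsGuardedSet SM B) :
    B.Finite := by
  obtain ⟨-, n, R, a, -, hsub⟩ := h
  exact (Set.finite_range a).subset hsub

section Equiv

def IsStrongHom (SM : L.Structure M) (SN : L.Structure N) (f : M → N) : Prop :=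
  ∀ {n : ℕ} (R : L.Relations n) (a : Fin n → M), SM.RelMap R a ↔ SN.RelMap R (fun i => f (a i))

variable {SM : L.Structure M} {SN : L.Structure N} (e : M ≃ N)

def PartialIso.ofEquiv (he : IsStrongHom SM SN e) (S : Set M) (hS : S.Finite) : PartialIso SM SN where
  dom := S
  finite_dom := hS
  toFun := e
  injOn := e.injective.injOn
  rel_iff := fun R a _ => he R a

def GuardedBisim.ofEquiv (he : IsStrongHom SM SN e) : GuardedBisim SM SN where
  Z := {α | α.toFun = e}
  nonempty := ⟨PartialIso.ofEquiv e he ∅ Set.finite_empty, rfl⟩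
  forth α hα B₀ hB₀ :=
    ⟨PartialIso.ofEquiv e he (α.dom ∪ B₀) (α.finite_dom.union hB₀.finite), rfl,
      Set.subset_union_right, fun x _ => congrFun hα x⟩
  back _ hα B₁ hB₁ :=
    ⟨PartialIso.ofEquiv e he (e.symm '' B₁) (hB₁.finite.image _), rfl,
      fun y hy => ⟨e.symm y, ⟨y, hy, rfl⟩, e.apply_symm_apply y⟩,
      fun x _ _ _ hxy => e.injective ((congrFun hα x).symm.trans hxy)⟩

theorem gbisimTuple_of_equiv (he : IsStrongHom SM SN e) {k : ℕ} (a : Fin k → M) :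
    GBisimTuple SM SN a (fun i => e (a i)) :=
  ⟨GuardedBisim.ofEquiv e he, PartialIso.ofEquiv e he _ (Set.finite_range a), rfl, rfl,
    fun _ => rfl⟩

end Equiv

namespace Tabloid

variable {T : Tabloid L K V} (σ : T.Auto)

def Auto.symm : T.Auto where
  toEquiv := σ.toEquiv.symm
  adj_iff z z' := by simpa using (σ.adj_iff (σ.toEquiv.symm z) (σ.toEquiv.symm z')).symm
  consts_eq z := by simpa using (σ.consts_eq (σ.toEquiv.symm z)).symm
  rel_iff z _ R c := by simpa using (σ.rel_iff (σ.toEquiv.symm z) R c).symm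

def Auto.toHom : T.graph →g T.graph where
  toFun := σ.toEquiv
  map_rel' h := (σ.adj_iff _ _).mp h

def Auto.pairMap (p : T.Pairs) : T.Pairs :=
  ⟨(σ.toEquiv p.1.1, p.1.2), by rw [σ.consts_eq]; exact p.2⟩

theorem Auto.symm_pairMap_pairMap (p : T.Pairs) : σ.symm.pairMap (σ.pairMap p) = p :=
  Subtype.ext (by simp [Auto.pairMap, Auto.symm])

theorem Auto.pairMap_symm_pairMap (p : T.Pairs) : σ.pairMap (σ.symm.pairMap p) = p :=
  Subtype.ext (by simp [Auto.pairMap, Auto.symm])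

def Auto.pairEquiv : T.Pairs ≃ T.Pairs where
  toFun := σ.pairMap
  invFun := σ.symm.pairMap
  left_inv := σ.symm_pairMap_pairMap
  right_inv := σ.pairMap_symm_pairMap

theorem Auto.keq_of_keq_pairMap {p q : T.Pairs} (h : T.keq (σ.pairMap p) (σ.pairMap q)) :
    T.keq p q := by
  refine ⟨h.1, fun W hW z hz => ?_⟩
  have hσz : σ.toEquiv z ∈ (W.map σ.toHom).support := by
    rw [SimpleGraph.Walk.support_map]
    exact List.mem_map_of_mem hz
  rw [← σ.consts_eq z]
  exact h.2 (W.map σ.toHom) (hW.map σ.toEquiv.injective) _ hσz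

theorem Auto.keq_pairMap_iff {p q : T.Pairs} :
    T.keq (σ.pairMap p) (σ.pairMap q) ↔ T.keq p q := by
  refine ⟨σ.keq_of_keq_pairMap, fun h => σ.symm.keq_of_keq_pairMap ?_⟩
  rwa [σ.symm_pairMap_pairMap, σ.symm_pairMap_pairMap]

def Auto.quotEquiv : Quot T.keq ≃ Quot T.keq :=
  Quot.congr σ.pairEquiv fun _ _ => σ.keq_pairMap_iff.symm

theorem Auto.symm_quotEquiv_quotEquiv (x : Quot T.keq) :
    σ.symm.quotEquiv (σ.quotEquiv x) = x := by
  induction x using Quot.ind with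
  | mk p => exact congrArg (Quot.mk T.keq) (σ.symm_pairMap_pairMap p)

theorem Auto.relMap_quotEquiv [L.IsRelational] {n : ℕ} {R : L.Relations n}
    {x : Fin n → Quot T.keq} (h : T.AT.RelMap R x) :
    T.AT.RelMap R (fun i => σ.quotEquiv (x i)) := by
  obtain ⟨u, c, hc, hx, hR⟩ := h
  exact ⟨σ.toEquiv u, c, fun i => σ.consts_eq u ▸ hc i, fun i => congrArg σ.quotEquiv (hx i),
    (σ.rel_iff u R c).mpr hR⟩

theorem Auto.isStrongHom_quotEquiv [L.IsRelational] : IsStrongHom T.AT T.AT σ.quotEquiv := by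
  refine fun R x => ⟨σ.relMap_quotEquiv, fun h => ?_⟩
  simpa only [σ.symm_quotEquiv_quotEquiv] using σ.symm.relMap_quotEquiv h

end Tabloid

theorem auto_gbisim_tuples_general {L : FirstOrder.Language} [L.IsRelational] {K V : Type*}
    (T : Tabloid L K V) (σ : T.Auto) (v w : V)
    (hvw : σ.toEquiv v = w) {r : ℕ} (c : Fin r → K)
    (hv : ∀ i, c i ∈ T.consts v)
    (hw : ∀ i, c i ∈ T.consts w) :
    GBisimTuple T.AT T.AT (fun i => Quot.mk T.keq ⟨((v, c i) : V × K), hv i⟩)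
      (fun i => Quot.mk T.keq ⟨((w, c i) : V × K), hw i⟩) := by
  subst hvw
  exact gbisimTuple_of_equiv σ.quotEquiv σ.isStrongHom_quotEquiv _

/-- If a label-preserving automorphism of a tree tabloid `T` maps node `v`
to node `w`, and `K_v = K_w = {c₁,…,cᵣ}`, then
`𝔄(T),([v,c₁],…,[v,cᵣ]) ∼_g 𝔄(T),([w,c₁],…,[w,cᵣ])`. -/
theorem auto_gbisim_tuples {L : FirstOrder.Language} [L.IsRelational] {K V : Type*}
    [Finite K] (T : Tabloid L K V) (ht : T.graph.IsTree) (σ : T.Auto) (v w : V)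
    (hvw : σ.toEquiv v = w) {r : ℕ} (c : Fin r → K) (hinj : Function.Injective c)
    (hv : ∀ i, c i ∈ T.consts v) (hv' : T.consts v ⊆ Set.range c)
    (hw : ∀ i, c i ∈ T.consts w) (hw' : T.consts w ⊆ Set.range c) :
    GBisimTuple T.AT T.AT (fun i => Quot.mk T.keq ⟨((v, c i) : V × K), hv i⟩)
      (fun i => Quot.mk T.keq ⟨((w, c i) : V × K), hw i⟩) :=
  auto_gbisim_tuples_general T σ v w hvw c hv hw

end GFPaper
end
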